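/- Conditioning-set augmentation step of the thorough querying lemma: in the setting below, suppose the query sampling is thorough and sequence-optimality holds for all times t ≤ n (i.e., for all t ≤ n, all q with S_{q,t} > 0, and all positive-probability histories j_{1..t}, μ(A_{q,t} | w_t = ŵ_t(j_{1..t})) = μ(A_{q,t} | I_{1..t} = j_{1..t})). Then for every instruction history i_{1..n+1} with μ(I_{1..n+1} = i_{1..n+1}) > 0 and every query q with S_{q,n+1} > 0, μ(A_{q,n+1} | {w_n = ŵ_n(i_{1..n})} ∩ {I_{n+1} = i_{n+1}}) = μ(A_{q,n+1} | I_{1..n+1} = i_{1..n+1}), where ŵ_t(i_{1..t}) denotes the deterministic value of w_t along the history i_{1..t}. -/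

import Mathlib

open MeasureTheory ProbabilityTheory

variable {Ω 𝓘 𝓠 𝓦 : Type*}

/-- The event that the instruction history up to time `n` equals `i₁, …, iₙ`
(only the times `1 ≤ t ≤ n` matter). -/
def histEvent (I : ℕ → Ω → Finset 𝓘) (i : ℕ → Finset 𝓘) (n : ℕ) : Set Ω :=
  {ω | ∀ t, 1 ≤ t → t ≤ n → I t ω = i t}

/-- The random world states `w_t`, defined recursively from the fixed initial state `w0`
and the deterministic updater `fδ` by `w_t = fδ (w_{t-1}, I_t)`. -/
def wseq (w0 : 𝓦) (fδ : 𝓦 → Finset 𝓘 → 𝓦) (I : ℕ → Ω → Finset 𝓘) : ℕ → Ω → 𝓦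
  | 0 => fun _ => w0
  | t + 1 => fun ω => fδ (wseq w0 fδ I t ω) (I (t + 1) ω)

/-- The deterministic value `ŵ_t(i_{1..t})` of the world state along the fixed history `i`. -/
def detW (w0 : 𝓦) (fδ : 𝓦 → Finset 𝓘 → 𝓦) (i : ℕ → Finset 𝓘) : ℕ → 𝓦
  | 0 => w0
  | t + 1 => fδ (detW w0 fδ i t) (i (t + 1))

/-- `q` is a recall query, at query time `t'`, for the instruction `v` received at time
`t ≤ t'`: for every positive-probability instruction history `i_{1..t'}` with `v ∈ i_t`,
the answer to `q` at time `t'` is almost surely `True` given the history, and almost surely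
`False` given the history with `v` removed from `i_t` (whenever the latter conditioning
event has positive probability). -/
def IsRecallQuery [MeasurableSpace Ω] [DecidableEq 𝓘] (μ : Measure Ω)
    (I : ℕ → Ω → Finset 𝓘) (A : 𝓠 → ℕ → Set Ω) (q : 𝓠) (v : 𝓘) (t t' : ℕ) : Prop :=
  t ≤ t' ∧
  (∀ i : ℕ → Finset 𝓘, v ∈ i t → 0 < μ (histEvent I i t') →
      μ[A q t' | histEvent I i t'] = 1) ∧
  (∀ i : ℕ → Finset 𝓘, v ∈ i t →
      0 < μ (histEvent I (Function.update i t (i t \ {v})) t') →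
      μ[A q t' | histEvent I (Function.update i t (i t \ {v})) t'] = 0)

/-- The query sampling is thorough: for every positive-probability instruction history
`i_{1..n}`, every time `1 ≤ t ≤ n`, every instruction `v ∈ i_t`, and every `t' ≥ t`,
there is a recall query for `v` at times `(t, t')` with positive sampling probability. -/
def Thorough [MeasurableSpace Ω] [DecidableEq 𝓘] (μ : Measure Ω)
    (I : ℕ → Ω → Finset 𝓘) (A : 𝓠 → ℕ → Set Ω) (S : 𝓠 → ℕ → ℝ) : Prop :=
  ∀ (n : ℕ) (i : ℕ → Finset 𝓘), 0 < μ (histEvent I i n) →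
    ∀ t, 1 ≤ t → t ≤ n → ∀ v ∈ i t, ∀ t', t ≤ t' →
      ∃ q : 𝓠, IsRecallQuery μ I A q v t t' ∧ 0 < S q t'

/-- The model `(w0, fδ)` is stepwise-optimal: at every time `t + 1`, for every query with
positive sampling probability and every positive-probability pair (previous world state,
incoming instruction set), conditioning on the updated world state gives the same
probability as conditioning on the previous world state and the incoming instructions. -/
def StepwiseOptimal [MeasurableSpace Ω] (μ : Measure Ω)
    (I : ℕ → Ω → Finset 𝓘) (A : 𝓠 → ℕ → Set Ω) (S : 𝓠 → ℕ → ℝ)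
    (w0 : 𝓦) (fδ : 𝓦 → Finset 𝓘 → 𝓦) : Prop :=
  ∀ (t : ℕ) (q : 𝓠), 0 < S q (t + 1) →
    ∀ (w : 𝓦) (s : Finset 𝓘),
      0 < μ ({ω | wseq w0 fδ I t ω = w} ∩ {ω | I (t + 1) ω = s}) →
      μ[A q (t + 1) | {ω | wseq w0 fδ I (t + 1) ω = fδ w s}]
        = μ[A q (t + 1) | {ω | wseq w0 fδ I t ω = w} ∩ {ω | I (t + 1) ω = s}]

/-! Thoroughness forces the world state at time `n` to remember the whole history: if two
positive-probability histories `i`, `j` led to the same state but some `v ∈ i_t` were missing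
from `j_t`, a recall query for `v` would have conditional probability `1` given `i` and `0`
given `j`, while by sequence-optimality both equal its probability given that common state.
Hence, up to null atoms, the event `{w_n = ŵ_n(i)} ∩ {I_{n+1} = i_{n+1}}` is the history
event of `i_{1..n+1}`, and conditioning on almost surely equal events gives the same measure. -/

section

lemma histEvent_anti (I : ℕ → Ω → Finset 𝓘) (i : ℕ → Finset 𝓘) {m n : ℕ} (hmn : m ≤ n) :
    histEvent I i n ⊆ histEvent I i m :=
  fun _ hω t h1 h2 => hω t h1 (h2.trans hmn)

lemma mem_histEvent_self (I : ℕ → Ω → Finset 𝓘) (ω : Ω) (n : ℕ) :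
    ω ∈ histEvent I (fun t => I t ω) n :=
  fun _ _ _ => rfl

lemma wseq_eq_detW_of_mem_histEvent (w0 : 𝓦) (fδ : 𝓦 → Finset 𝓘 → 𝓦)
    (I : ℕ → Ω → Finset 𝓘) (i : ℕ → Finset 𝓘) {n : ℕ} {ω : Ω} (hω : ω ∈ histEvent I i n) :
    wseq w0 fδ I n ω = detW w0 fδ i n := by
  induction n with
  | zero => rfl
  | succ n ih =>
    simp only [wseq, detW, ih (histEvent_anti I i n.le_succ hω),
      hω (n + 1) n.succ_pos le_rfl]

lemma cond_congr_set [MeasurableSpace Ω] (μ : Measure Ω) {s t : Set Ω} (h : s =ᵐ[μ] t) :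
    μ[|s] = μ[|t] := by
  simp only [ProbabilityTheory.cond, measure_congr h, Measure.restrict_congr_set h]

variable [MeasurableSpace Ω] {μ : Measure Ω} {I : ℕ → Ω → Finset 𝓘}
  {w0 : 𝓦} {fδ : 𝓦 → Finset 𝓘 → 𝓦} {n : ℕ}

lemma subset_of_detW_eq [DecidableEq 𝓘] {A : 𝓠 → ℕ → Set Ω} {S : 𝓠 → ℕ → ℝ}
    (hT : Thorough μ I A S)
    (hSeq : ∀ q : 𝓠, 0 < S q n → ∀ j : ℕ → Finset 𝓘, 0 < μ (histEvent I j n) →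
      μ[A q n | {ω | wseq w0 fδ I n ω = detW w0 fδ j n}] = μ[A q n | histEvent I j n])
    {i j : ℕ → Finset 𝓘} (hi : 0 < μ (histEvent I i n)) (hj : 0 < μ (histEvent I j n))
    (hw : detW w0 fδ i n = detW w0 fδ j n) {t : ℕ} (ht : t ∈ Set.Icc 1 n) :
    i t ⊆ j t := by
  intro v hvi
  by_contra hvj
  obtain ⟨q, ⟨-, hrecall, hforget⟩, hq⟩ := hT n i hi t ht.1 ht.2 v hvi n ht.2
  -- `j` is the history `j'` with `v` forgotten at time `t`
  set j' := Function.update j t (insert v (j t))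
  have hj' : Function.update j' t (j' t \ {v}) = j := by
    simp [j', Finset.sdiff_singleton_eq_erase, Finset.erase_insert hvj]
  have hforget_j := hforget j' (by simp [j'])
  rw [hj'] at hforget_j
  have : (1 : ENNReal) = 0 := calc
    1 = μ[A q n | histEvent I i n] := (hrecall i hvi hi).symm
    _ = μ[A q n | {ω | wseq w0 fδ I n ω = detW w0 fδ i n}] := (hSeq q hq i hi).symm
    _ = μ[A q n | histEvent I j n] := hw ▸ hSeq q hq j hj
    _ = 0 := hforget_j hj
  exact one_ne_zero this

lemma eqOn_of_detW_eq [DecidableEq 𝓘] {A : 𝓠 → ℕ → Set Ω} {S : 𝓠 → ℕ → ℝ}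
    (hT : Thorough μ I A S)
    (hSeq : ∀ q : 𝓠, 0 < S q n → ∀ j : ℕ → Finset 𝓘, 0 < μ (histEvent I j n) →
      μ[A q n | {ω | wseq w0 fδ I n ω = detW w0 fδ j n}] = μ[A q n | histEvent I j n])
    {i j : ℕ → Finset 𝓘} (hi : 0 < μ (histEvent I i n)) (hj : 0 < μ (histEvent I j n))
    (hw : detW w0 fδ i n = detW w0 fδ j n) :
    Set.EqOn i j (Set.Icc 1 n) := fun _ ht =>
  (subset_of_detW_eq hT hSeq hi hj hw ht).antisymm (subset_of_detW_eq hT hSeq hj hi hw.symm ht)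

lemma worldState_inter_ae_eq_histEvent [Countable Ω] {i : ℕ → Finset 𝓘}
    (hinj : ∀ j : ℕ → Finset 𝓘, 0 < μ (histEvent I j n) →
      detW w0 fδ j n = detW w0 fδ i n → Set.EqOn j i (Set.Icc 1 n)) :
    ({ω | wseq w0 fδ I n ω = detW w0 fδ i n} ∩ {ω | I (n + 1) ω = i (n + 1)} : Set Ω)
      =ᵐ[μ] histEvent I i (n + 1) := by
  have hsub : histEvent I i (n + 1) ⊆
      {ω | wseq w0 fδ I n ω = detW w0 fδ i n} ∩ {ω | I (n + 1) ω = i (n + 1)} :=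
    fun ω hω => ⟨wseq_eq_detW_of_mem_histEvent w0 fδ I i (histEvent_anti I i n.le_succ hω),
      hω (n + 1) n.succ_pos le_rfl⟩
  refine (ae_le_set.mpr ?_).antisymm hsub.eventuallyLE
  refine (measure_null_iff_singleton (Set.to_countable _)).mpr fun ω ⟨⟨hw, hlast⟩, hωi⟩ => ?_
  by_contra hω
  have hj : 0 < μ (histEvent I (fun t => I t ω) n) :=
    (pos_iff_ne_zero.mpr hω).trans_le
      (measure_mono (Set.singleton_subset_iff.mpr (mem_histEvent_self I ω n)))
  have heq := hinj _ hj
    ((wseq_eq_detW_of_mem_histEvent w0 fδ I _ (mem_histEvent_self I ω n)).symm.trans hw)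
  refine hωi fun t h1 h2 => ?_
  rcases h2.lt_or_eq with h2 | rfl
  · exact heq ⟨h1, Nat.lt_succ_iff.mp h2⟩
  · exact hlast

end

theorem cond_worldState_instructions_eq_cond_history_general
    [Countable Ω] [MeasurableSpace Ω]
    [DecidableEq 𝓘]
    (μ : Measure Ω)
    (I : ℕ → Ω → Finset 𝓘) (A : 𝓠 → ℕ → Set Ω) (S : 𝓠 → ℕ → ℝ)
    (w0 : 𝓦) (fδ : 𝓦 → Finset 𝓘 → 𝓦) (n : ℕ)
    (hT : Thorough μ I A S)
    (hSeq : ∀ t, 1 ≤ t → t ≤ n → ∀ q : 𝓠, 0 < S q t → ∀ j : ℕ → Finset 𝓘,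
        0 < μ (histEvent I j t) →
        μ[A q t | {ω | wseq w0 fδ I t ω = detW w0 fδ j t}]
          = μ[A q t | histEvent I j t]) :
    ∀ i : ℕ → Finset 𝓘, 0 < μ (histEvent I i (n + 1)) →
      ∀ q : 𝓠, 0 < S q (n + 1) →
        μ[A q (n + 1) |
            {ω | wseq w0 fδ I n ω = detW w0 fδ i n} ∩ {ω | I (n + 1) ω = i (n + 1)}]
          = μ[A q (n + 1) | histEvent I i (n + 1)] := by
  intro i hi q _
  have hin : 0 < μ (histEvent I i n) :=
    hi.trans_le (measure_mono (histEvent_anti I i n.le_succ))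
  have hinj : ∀ j : ℕ → Finset 𝓘, 0 < μ (histEvent I j n) →
      detW w0 fδ j n = detW w0 fδ i n → Set.EqOn j i (Set.Icc 1 n) := fun j hj hw _ ht =>
    eqOn_of_detW_eq hT (hSeq n (ht.1.trans ht.2) le_rfl) hj hin hw ht
  rw [cond_congr_set μ (worldState_inter_ae_eq_histEvent hinj)]

/-- **Conditioning-set augmentation step of the thorough querying lemma.** Suppose the
query sampling is thorough and sequence-optimality holds for all times `1 ≤ t ≤ n`. Then
for every positive-probability instruction history `i_{1..n+1}` and every query `q` with
`S_{q,n+1} > 0`, conditioning on the world state `w_n = ŵ_n(i_{1..n})` together with the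
incoming instructions `I_{n+1} = i_{n+1}` gives the same probability of `A_{q,n+1}` as
conditioning on the full history `I_{1..n+1} = i_{1..n+1}`. -/
theorem cond_worldState_instructions_eq_cond_history
    [Countable Ω] [MeasurableSpace Ω] [MeasurableSingletonClass Ω]
    [Countable 𝓘] [DecidableEq 𝓘]
    (μ : Measure Ω) [IsProbabilityMeasure μ]
    (I : ℕ → Ω → Finset 𝓘) (A : 𝓠 → ℕ → Set Ω) (S : 𝓠 → ℕ → ℝ)
    (w0 : 𝓦) (fδ : 𝓦 → Finset 𝓘 → 𝓦) (n : ℕ)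
    (hT : Thorough μ I A S)
    (hSeq : ∀ t, 1 ≤ t → t ≤ n → ∀ q : 𝓠, 0 < S q t → ∀ j : ℕ → Finset 𝓘,
        0 < μ (histEvent I j t) →
        μ[A q t | {ω | wseq w0 fδ I t ω = detW w0 fδ j t}]
          = μ[A q t | histEvent I j t]) :
    ∀ i : ℕ → Finset 𝓘, 0 < μ (histEvent I i (n + 1)) →
      ∀ q : 𝓠, 0 < S q (n + 1) →
        μ[A q (n + 1) |
            {ω | wseq w0 fδ I n ω = detW w0 fδ i n} ∩ {ω | I (n + 1) ω = i (n + 1)}]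
          = μ[A q (n + 1) | histEvent I i (n + 1)] :=
  cond_worldState_instructions_eq_cond_history_general μ I A S w0 fδ n hT hSeq
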